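/- If a bipartite density matrix ρ on n+m qubits commutes with the total number operator N = N_A + N_B, then its partial transpose is block diagonal with respect to the eigenspaces of N_A − N_B: ρ^Γ = Σ_q P_q ρ^Γ P_q, where P_q is the orthogonal projector onto the eigenspace of N_A − N_B with eigenvalue q. -/

import Mathlib

open scoped ComplexOrder
/-- The partial transpose with respect to the second (B) subsystem. -/
def partialTranspose {α β : Type*} (M : Matrix (α × β) (α × β) ℂ) :
    Matrix (α × β) (α × β) ℂ :=
  Matrix.of fun p q => M (p.1, q.2) (q.1, p.2)

/-- Number of excitations (Hamming weight) of a computational basis state. -/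
def wt {n : ℕ} (x : Fin n → Bool) : ℕ := (Finset.univ.filter (fun i => x i = true)).card

/-- The total number operator `N = N_A + N_B` on `n + m` qubits (diagonal in the
computational basis, with eigenvalue the total number of excitations). -/
def numberOp (n m : ℕ) : Matrix ((Fin n → Bool) × (Fin m → Bool)) ((Fin n → Bool) × (Fin m → Bool)) ℂ :=
  Matrix.diagonal (fun p => ((wt p.1 + wt p.2 : ℕ) : ℂ))

/-- The orthogonal projector `P_q = Σ_{a−b=q} Π_a(A) ⊗ Π_b(B)` onto the eigenspace of
`N_A − N_B` with eigenvalue `q`. -/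
def Pq (n m : ℕ) (q : ℤ) :
    Matrix ((Fin n → Bool) × (Fin m → Bool)) ((Fin n → Bool) × (Fin m → Bool)) ℂ :=
  Matrix.diagonal (fun p => if (wt p.1 : ℤ) - (wt p.2 : ℤ) = q then 1 else 0)

/-!
Since `N` is diagonal in the computational basis, commuting with it means `ρ` only couples basis
states with the same total excitation number: `ρ (a, b) (a', b') = 0` unless
`|a| + |b| = |a'| + |b'|`. The partial transpose swaps `b` and `b'`, so `ρ^Γ (a, b') (a', b)` can
only be nonzero when `|a| - |b'| = |a'| - |b|`, i.e. `ρ^Γ` only couples states with the same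
eigenvalue of `N_A - N_B`. Such a matrix is the sum of its diagonal blocks `P_q ρ^Γ P_q`, and every
eigenvalue lies in `[-m, n]`.
-/

open Matrix

namespace Matrix

variable {ι : Type*} [Fintype ι] [DecidableEq ι]

theorem apply_eq_zero_of_mul_diagonal_eq {R : Type*} [CommRing R] [NoZeroDivisors R]
    {M : Matrix ι ι R} {d : ι → R} (h : M * diagonal d = diagonal d * M) {x y : ι}
    (hxy : d x ≠ d y) : M x y = 0 := by
  have hxy' : M x y * d y = d x * M x y := by
    simpa only [mul_diagonal, diagonal_mul] using congr_fun₂ h x y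
  have : (d y - d x) * M x y = 0 := by linear_combination hxy'
  exact (mul_eq_zero.mp this).resolve_left (sub_ne_zero.mpr hxy.symm)

theorem sum_diagonal_mul_mul_diagonal_eq_self {R κ : Type*} [Semiring R] [DecidableEq κ]
    (f : ι → κ) {S : Finset κ} (hS : ∀ x, f x ∈ S) {M : Matrix ι ι R}
    (hM : ∀ x y, f x ≠ f y → M x y = 0) :
    ∑ q ∈ S, diagonal (fun x => if f x = q then 1 else 0) * M *
      diagonal (fun x => if f x = q then 1 else 0) = M := by
  ext x y
  rw [sum_apply, Finset.sum_eq_single_of_mem (f x) (hS x)]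
  · by_cases hxy : f x = f y
    · simp [mul_diagonal, diagonal_mul, hxy]
    · simp [mul_diagonal, diagonal_mul, hM x y hxy]
  · intro q _ hq
    simp [mul_diagonal, diagonal_mul, Ne.symm hq]

end Matrix

theorem partialTranspose_apply_eq_zero {α β G : Type*} [AddCommGroup G]
    {M : Matrix (α × β) (α × β) ℂ} {a : α → G} {b : β → G}
    (hM : ∀ x y, a x.1 + b x.2 ≠ a y.1 + b y.2 → M x y = 0) {p r : α × β}
    (hpr : a p.1 - b p.2 ≠ a r.1 - b r.2) : partialTranspose M p r = 0 :=
  hM _ _ fun h => hpr (sub_eq_sub_iff_add_eq_add.mpr h)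

theorem wt_le {n : ℕ} (x : Fin n → Bool) : wt x ≤ n :=
  (Finset.card_filter_le _ _).trans (by simp)

theorem stmt_9_general (n m : ℕ)
    (ρ : Matrix ((Fin n → Bool) × (Fin m → Bool)) ((Fin n → Bool) × (Fin m → Bool)) ℂ)
    (hsym : ρ * numberOp n m = numberOp n m * ρ) :
    partialTranspose ρ =
      ∑ q ∈ Finset.Icc (-(m : ℤ)) (n : ℤ), Pq n m q * partialTranspose ρ * Pq n m q := by
  have hconserved : ∀ x y : (Fin n → Bool) × (Fin m → Bool),
      (wt x.1 : ℤ) + wt x.2 ≠ wt y.1 + wt y.2 → ρ x y = 0 :=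
    fun x y hxy => apply_eq_zero_of_mul_diagonal_eq hsym (by exact_mod_cast hxy)
  have hcharge_mem : ∀ p : (Fin n → Bool) × (Fin m → Bool),
      (wt p.1 : ℤ) - wt p.2 ∈ Finset.Icc (-(m : ℤ)) n := fun p => by
    have := wt_le p.1
    have := wt_le p.2
    rw [Finset.mem_Icc]
    omega
  exact (sum_diagonal_mul_mul_diagonal_eq_self _ hcharge_mem
    fun _ _ => partialTranspose_apply_eq_zero (a := fun x => (wt x : ℤ))
      (b := fun x => (wt x : ℤ)) hconserved).symm

/-- If a bipartite density matrix `ρ` on `n + m` qubits commutes with the total number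
operator, then its partial transpose is block diagonal with respect to the eigenspaces of
`N_A − N_B`: `ρ^Γ = Σ_q P_q ρ^Γ P_q`. -/
theorem stmt_9 (n m : ℕ)
    (ρ : Matrix ((Fin n → Bool) × (Fin m → Bool)) ((Fin n → Bool) × (Fin m → Bool)) ℂ)
    (hρ : ρ.PosSemidef) (htr : ρ.trace = 1)
    (hsym : ρ * numberOp n m = numberOp n m * ρ) :
    partialTranspose ρ =
      ∑ q ∈ Finset.Icc (-(m : ℤ)) (n : ℤ), Pq n m q * partialTranspose ρ * Pq n m q :=
  stmt_9_general n m ρ hsym
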